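/- arXiv:math/0008214 — 5 statements merged into one kernel-verified Lean document; each statement's English description precedes it below -/
import Mathlib

section
/- If S : X → Set Y and T : Y → Set Z are linear relations with nonempty values such that S(0) and T(0) are finite-dimensional subspaces, then (T∘S)(0) is a finite-dimensional subspace of Z. -/
open Pointwise

/-!
The graph of `T` is a submodule of `Y × Z`, and `⋃ y ∈ S 0, T y` is the image under the second
projection of the part `G` of the graph lying over `U = S 0`. This `G` is finitely generated:
its first projection lies in `U`, and its intersection with the kernel of the first projection
lies in `{0} × T 0`.
-/

namespace LinearRelation

variable {R Y Z : Type*} [Ring R] [AddCommGroup Y] [Module R Y] [AddCommGroup Z] [Module R Z]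

def graph (T : Y → Set Z) (h0 : (0 : Z) ∈ T 0)
    (hsmul : ∀ a : R, a ≠ 0 → ∀ y, T (a • y) = a • T y)
    (hadd : ∀ y y', T (y + y') = T y + T y') : Submodule R (Y × Z) where
  carrier := {p | p.2 ∈ T p.1}
  zero_mem' := show (0 : Z) ∈ T 0 from h0
  add_mem' {p q} hp hq := by
    simp only [Set.mem_ofPred_eq, Prod.fst_add, Prod.snd_add, hadd] at hp hq ⊢
    exact Set.add_mem_add hp hq
  smul_mem' a p hp := by
    rcases eq_or_ne a 0 with rfl | ha
    · simpa only [zero_smul, Set.mem_ofPred_eq, Prod.fst_zero, Prod.snd_zero] using h0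
    · simp only [Set.mem_ofPred_eq, Prod.smul_fst, Prod.smul_snd, hsmul a ha] at hp ⊢
      exact Set.smul_mem_smul_set hp

variable {T : Y → Set Z} {h0 : (0 : Z) ∈ T 0}
  {hsmul : ∀ a : R, a ≠ 0 → ∀ y, T (a • y) = a • T y} {hadd : ∀ y y', T (y + y') = T y + T y'}

@[simp]
theorem mem_graph {p : Y × Z} : p ∈ graph T h0 hsmul hadd ↔ p.2 ∈ T p.1 := Iff.rfl

theorem coe_map_snd_graph_inf_comap_fst (U : Submodule R Y) :
    ((graph T h0 hsmul hadd ⊓ U.comap (LinearMap.fst R Y Z)).map (LinearMap.snd R Y Z) : Set Z) =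
      ⋃ y ∈ (U : Set Y), T y := by
  ext z
  simp [and_comm]

theorem graph_inf_ker_fst_le {V : Submodule R Z} (hV : T 0 ⊆ V) :
    graph T h0 hsmul hadd ⊓ LinearMap.ker (LinearMap.fst R Y Z) ≤ V.map (LinearMap.inr R Y Z) := by
  rintro ⟨y, z⟩ ⟨hz, rfl : y = 0⟩
  exact ⟨z, hV hz, rfl⟩

theorem fg_graph_inf_comap_fst [IsNoetherianRing R] {U : Submodule R Y} {V : Submodule R Z}
    (hU : U.FG) (hV : V.FG) (hTV : T 0 ⊆ V) :
    (graph T h0 hsmul hadd ⊓ U.comap (LinearMap.fst R Y Z)).FG :=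
  Submodule.fg_of_fg_map_of_fg_inf_ker (LinearMap.fst R Y Z)
    (hU.of_le (Submodule.map_le_iff_le_comap.mpr inf_le_right))
    ((hV.map _).of_le (le_trans (inf_le_inf_right _ inf_le_left) (graph_inf_ker_fst_le hTV)))

end LinearRelation

open LinearRelation in
theorem linearRelation_comp_zero_finiteDimensional_general
    {K X Y Z : Type*} [Field K] [AddCommGroup X] [Module K X] [AddCommGroup Y] [Module K Y]
    [AddCommGroup Z] [Module K Z]
    (S : X → Set Y) (T : Y → Set Z)
    (hTsmul : ∀ a : K, a ≠ 0 → ∀ y, T (a • y) = a • T y)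
    (hTadd : ∀ y y', T (y + y') = T y + T y')
    (hS0 : ∃ U : Submodule K Y, (U : Set Y) = S 0 ∧ FiniteDimensional K U)
    (hT0 : ∃ V : Submodule K Z, (V : Set Z) = T 0 ∧ FiniteDimensional K V) :
    ∃ W : Submodule K Z, (W : Set Z) = (⋃ y ∈ S 0, T y) ∧ FiniteDimensional K W := by
  obtain ⟨U, hUS, hU⟩ := hS0
  obtain ⟨V, hV, hVfin⟩ := hT0
  have h0 : (0 : Z) ∈ T 0 := hV ▸ V.zero_mem
  let G := graph T h0 hTsmul hTadd ⊓ U.comap (LinearMap.fst K Y Z)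
  have hG : G.FG := fg_graph_inf_comap_fst (Module.Finite.iff_fg.mp hU)
    (Module.Finite.iff_fg.mp hVfin) hV.ge
  exact ⟨G.map (LinearMap.snd K Y Z), hUS ▸ coe_map_snd_graph_inf_comap_fst U,
    Module.Finite.iff_fg.mpr (hG.map _)⟩

/-- If `S` and `T` are linear relations whose values at `0` are finite-dimensional
subspaces, then `(T ∘ S) 0` is a finite-dimensional subspace. -/
theorem linearRelation_comp_zero_finiteDimensional
    {K X Y Z : Type*} [Field K] [AddCommGroup X] [Module K X] [AddCommGroup Y] [Module K Y]
    [AddCommGroup Z] [Module K Z]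
    (S : X → Set Y) (T : Y → Set Z)
    (hSne : ∀ x, (S x).Nonempty)
    (hSsmul : ∀ a : K, a ≠ 0 → ∀ x, S (a • x) = a • S x)
    (hSadd : ∀ x y, S (x + y) = S x + S y)
    (hTne : ∀ y, (T y).Nonempty)
    (hTsmul : ∀ a : K, a ≠ 0 → ∀ y, T (a • y) = a • T y)
    (hTadd : ∀ y y', T (y + y') = T y + T y')
    (hS0 : ∃ U : Submodule K Y, (U : Set Y) = S 0 ∧ FiniteDimensional K U)
    (hT0 : ∃ V : Submodule K Z, (V : Set Z) = T 0 ∧ FiniteDimensional K V) :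
    ∃ W : Submodule K Z, (W : Set Z) = (⋃ y ∈ S 0, T y) ∧ FiniteDimensional K W :=
  linearRelation_comp_zero_finiteDimensional_general S T hTsmul hTadd hS0 hT0
end

section
/- Let h and R be linear relations on Y such that R commutes with h (h∘R ⊆ R∘h) and h(0) ⊆ R(0). Then M = Fix(R) = {x : x ∈ R(x)} is h-weakly-invariant: for every x ∈ M, h(x) ∩ M ≠ ∅. -/
open Pointwise

/-!
For `x ∈ Fix R` pick any `w ∈ h x`. Since `w ∈ (h ∘ R) x ⊆ (R ∘ h) x`, there is `y ∈ h x` with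
`w ∈ R y`. Both `y` and `w` lie in the coset `h x` of `h 0`, so `y - w ∈ h 0 ⊆ R 0`, and then
`y = w + (y - w) ∈ R y + R 0 = R y`.
-/

section LinearRelation

variable {Y : Type*} [AddCommGroup Y] {f : Y → Set Y}

theorem apply_neg_eq_neg_apply {K : Type*} [Ring K] [Nontrivial K] [Module K Y]
    (hsmul : ∀ a : K, a ≠ 0 → ∀ x, f (a • x) = a • f x) (x : Y) : f (-x) = -f x := by
  rw [← neg_one_smul K x, hsmul (-1) (neg_ne_zero.2 one_ne_zero), Set.neg_smul_set, one_smul]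

theorem sub_mem_apply_zero (hadd : ∀ x y, f (x + y) = f x + f y)
    (hneg : ∀ x, f (-x) = -f x) {x y w : Y} (hy : y ∈ f x) (hw : w ∈ f x) : y - w ∈ f 0 := by
  rw [← add_neg_cancel x, hadd, hneg, sub_eq_add_neg]
  exact Set.add_mem_add hy (Set.neg_mem_neg.2 hw)

theorem add_mem_of_mem_apply_zero (hadd : ∀ x y, f (x + y) = f x + f y)
    {x w u : Y} (hw : w ∈ f x) (hu : u ∈ f 0) : w + u ∈ f x := by
  simpa only [← hadd, add_zero] using Set.add_mem_add hw hu

end LinearRelation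

theorem fix_weakly_invariant_general
    {K Y : Type*} [Field K] [AddCommGroup Y] [Module K Y]
    (h R : Y → Set Y)
    (hne : ∀ x, (h x).Nonempty)
    (hsmul : ∀ a : K, a ≠ 0 → ∀ x, h (a • x) = a • h x)
    (hadd : ∀ x y, h (x + y) = h x + h y)
    (hRadd : ∀ x y, R (x + y) = R x + R y)
    (hcomm : ∀ x, (⋃ y ∈ R x, h y) ⊆ ⋃ y ∈ h x, R y)
    (h0 : h 0 ⊆ R 0) :
    ∀ x ∈ {x | x ∈ R x}, (h x ∩ {x | x ∈ R x}).Nonempty := by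
  intro x hx
  obtain ⟨w, hw⟩ := hne x
  obtain ⟨y, hy, hwy⟩ := Set.mem_iUnion₂.1 (hcomm x (Set.mem_biUnion hx hw))
  have hyw : y - w ∈ R 0 :=
    h0 (sub_mem_apply_zero hadd (apply_neg_eq_neg_apply hsmul) hy hw)
  have hyR : w + (y - w) ∈ R y := add_mem_of_mem_apply_zero hRadd hwy hyw
  exact ⟨y, hy, by rwa [add_sub_cancel] at hyR⟩

/-- If `R` commutes with `h` and `h 0 ⊆ R 0`, then `Fix(R)` is `h`-weakly-invariant. -/
theorem fix_weakly_invariant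
    {K Y : Type*} [Field K] [AddCommGroup Y] [Module K Y]
    (h R : Y → Set Y)
    (hne : ∀ x, (h x).Nonempty)
    (hsmul : ∀ a : K, a ≠ 0 → ∀ x, h (a • x) = a • h x)
    (hadd : ∀ x y, h (x + y) = h x + h y)
    (hRne : ∀ x, (R x).Nonempty)
    (hRsmul : ∀ a : K, a ≠ 0 → ∀ x, R (a • x) = a • R x)
    (hRadd : ∀ x y, R (x + y) = R x + R y)
    (hcomm : ∀ x, (⋃ y ∈ R x, h y) ⊆ ⋃ y ∈ h x, R y)
    (h0 : h 0 ⊆ R 0) :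
    ∀ x ∈ {x | x ∈ R x}, (h x ∩ {x | x ∈ R x}).Nonempty :=
  fix_weakly_invariant_general h R hne hsmul hadd hRadd hcomm h0
end

section
/- Every linear relation h with nonempty values on a finite-dimensional complex vector space E whose value h(0) is (automatically) a subspace has an eigenvector: there exist λ ∈ ℂ and u ≠ 0 with λ•u ∈ h(u). -/
open Pointwise

/-!
The values of a linear relation `h` are the cosets of its multivalued part `S = h 0`, so `h`
descends to a linear map `f : E → E ⧸ S` with `y ∈ h x ↔ [y] = f x`. An eigenvector of `f`
composed with a section of `E → E ⧸ S` lifts to an eigenvector of `h`.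
-/

theorem Submodule.exists_ne_zero_mkQ_smul_eq {K V : Type*} [Field K] [IsAlgClosed K]
    [AddCommGroup V] [Module K V] [FiniteDimensional K V] [Nontrivial V]
    (S : Submodule K V) (f : V →ₗ[K] V ⧸ S) :
    ∃ (μ : K) (v : V), v ≠ 0 ∧ S.mkQ (μ • v) = f v := by
  rcases eq_or_ne S ⊤ with rfl | hS
  · obtain ⟨v, hv⟩ := exists_ne (0 : V)
    exact ⟨0, v, hv, Subsingleton.elim _ _⟩
  · have : Nontrivial (V ⧸ S) := Submodule.Quotient.nontrivial_iff.mpr hS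
    obtain ⟨σ, hσ⟩ := S.mkQ.exists_rightInverse_of_surjective S.range_mkQ
    obtain ⟨μ, hμ⟩ := Module.End.exists_eigenvalue (f ∘ₗ σ)
    obtain ⟨w, hw⟩ := hμ.exists_hasEigenvector
    have hσw : S.mkQ (σ w) = w := LinearMap.congr_fun hσ w
    refine ⟨μ, σ w, fun h0 => hw.2 ?_, ?_⟩
    · rw [← hσw, h0, map_zero]
    · rw [map_smul, hσw]
      exact hw.apply_eq_smul.symm

structure IsLinearRelation (K : Type*) {E : Type*} [Field K] [AddCommGroup E] [Module K E]
    (h : E → Set E) : Prop where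
  nonempty : ∀ x, (h x).Nonempty
  smul : ∀ a : K, a ≠ 0 → ∀ x, h (a • x) = a • h x
  add : ∀ x y, h (x + y) = h x + h y

namespace IsLinearRelation

variable {K E : Type*} [Field K] [AddCommGroup E] [Module K E] {h : E → Set E}

theorem add_mem_add (hl : IsLinearRelation K h) {x x' y y' : E} (hy : y ∈ h x)
    (hy' : y' ∈ h x') : y + y' ∈ h (x + x') :=
  hl.add x x' ▸ Set.add_mem_add hy hy'

theorem zero_mem (hl : IsLinearRelation K h) : (0 : E) ∈ h 0 := by
  obtain ⟨y, hy⟩ := hl.nonempty 0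
  have hneg : -y ∈ h 0 := by
    rw [← smul_zero (-1 : K), hl.smul (-1) (by simp), ← neg_one_smul K y]
    exact Set.smul_mem_smul_set hy
  simpa using hl.add_mem_add hy hneg

theorem smul_mem_smul (hl : IsLinearRelation K h) (a : K) {x y : E} (hy : y ∈ h x) :
    a • y ∈ h (a • x) := by
  rcases eq_or_ne a 0 with rfl | ha
  · simpa using hl.zero_mem
  · exact hl.smul a ha x ▸ Set.smul_mem_smul_set hy

def multivaluedPart (hl : IsLinearRelation K h) : Submodule K E where
  carrier := h 0
  add_mem' hy hy' := by simpa using hl.add_mem_add hy hy'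
  zero_mem' := hl.zero_mem
  smul_mem' a _ hy := by simpa using hl.smul_mem_smul a hy

theorem mem_iff_sub_mem (hl : IsLinearRelation K h) {x y₀ y : E} (hy₀ : y₀ ∈ h x) :
    y ∈ h x ↔ y - y₀ ∈ hl.multivaluedPart := by
  constructor
  · intro hy
    have := hl.add_mem_add hy (hl.smul_mem_smul (-1) hy₀)
    rwa [neg_one_smul, neg_one_smul, ← sub_eq_add_neg, ← sub_eq_add_neg, sub_self] at this
  · intro hd
    simpa using hl.add_mem_add hy₀ hd

theorem mkQ_eq_mkQ_of_mem (hl : IsLinearRelation K h) {x y y' : E} (hy : y ∈ h x)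
    (hy' : y' ∈ h x) : hl.multivaluedPart.mkQ y = hl.multivaluedPart.mkQ y' :=
  (Submodule.Quotient.eq _).mpr ((hl.mem_iff_sub_mem hy').mp hy)

noncomputable def toQuotient (hl : IsLinearRelation K h) : E →ₗ[K] E ⧸ hl.multivaluedPart where
  toFun x := hl.multivaluedPart.mkQ (hl.nonempty x).some
  map_add' x x' := by
    rw [← map_add]
    exact hl.mkQ_eq_mkQ_of_mem (Set.Nonempty.some_mem _)
      (hl.add_mem_add (Set.Nonempty.some_mem _) (Set.Nonempty.some_mem _))
  map_smul' a x := by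
    rw [RingHom.id_apply, ← map_smul]
    exact hl.mkQ_eq_mkQ_of_mem (Set.Nonempty.some_mem _)
      (hl.smul_mem_smul a (Set.Nonempty.some_mem _))

theorem mem_iff_mkQ_eq (hl : IsLinearRelation K h) {x y : E} :
    y ∈ h x ↔ hl.multivaluedPart.mkQ y = hl.toQuotient x :=
  ⟨fun hy => hl.mkQ_eq_mkQ_of_mem hy (hl.nonempty x).some_mem,
    fun he => (hl.mem_iff_sub_mem (hl.nonempty x).some_mem).mpr ((Submodule.Quotient.eq _).mp he)⟩

end IsLinearRelation

/-- Every linear relation with nonempty values on a nonzero finite-dimensional complex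
vector space has an eigenvector. -/
theorem linearRelation_exists_eigenvector
    {E : Type*} [AddCommGroup E] [Module ℂ E] [FiniteDimensional ℂ E] [Nontrivial E]
    (h : E → Set E) (hne : ∀ x, (h x).Nonempty)
    (hsmul : ∀ a : ℂ, a ≠ 0 → ∀ x, h (a • x) = a • h x)
    (hadd : ∀ x y, h (x + y) = h x + h y) :
    ∃ (l : ℂ) (u : E), u ≠ 0 ∧ l • u ∈ h u := by
  have hl : IsLinearRelation ℂ h := ⟨hne, hsmul, hadd⟩
  obtain ⟨l, u, hu, hlu⟩ := hl.multivaluedPart.exists_ne_zero_mkQ_smul_eq hl.toQuotient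
  exact ⟨l, u, hu, hl.mem_iff_mkQ_eq.mpr hlu⟩
end

section
/- Let Y be a normed space and T : X → Set Y a linear relation with nonempty values such that T(0) is finite dimensional. If for every bounded B ⊆ X there exists a compact C ⊆ Y with T(B) ⊆ C + T(0), then the induced quotient operator Q_T ∘ T : X → Y/T(0) (which is single-valued and linear) is a compact operator, and conversely. -/
/-!
Every value `T x` lies in the single coset of `W` labelled by `t x`, so the quotient map carries
`⋃ x ∈ B, T x` onto `t '' B`. If that union lies in `C + W` with `C` compact, then `t '' B` lies in
the compact image of `C`. Conversely, a finite-dimensional subspace is topologically complemented,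
so the quotient map has a continuous linear right inverse `s`, and the preimage of a compact `C`
in the quotient is `s '' C + W` with `s '' C` compact.
-/

open Pointwise

namespace Submodule

variable {R M : Type*} [Ring R] [AddCommGroup M] [Module R M]

theorem preimage_image_mk_eq_add (p : Submodule R M) (S : Set M) :
    Quotient.mk ⁻¹' (Quotient.mk '' S : Set (M ⧸ p)) = S + (p : Set M) :=
  QuotientAddGroup.preimage_image_mk_eq_add p.toAddSubgroup S

theorem image_mk_add_eq (p : Submodule R M) (S : Set M) :
    (Quotient.mk '' (S + (p : Set M)) : Set (M ⧸ p)) = Quotient.mk '' S := by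
  rw [← preimage_image_mk_eq_add, Set.image_preimage_eq _ (Quotient.mk_surjective p)]

theorem preimage_mk_eq_image_add {p : Submodule R M} {s : M ⧸ p → M}
    (hs : Function.RightInverse s Quotient.mk) (C : Set (M ⧸ p)) :
    Quotient.mk ⁻¹' C = s '' C + (p : Set M) := by
  rw [← preimage_image_mk_eq_add, hs.image_image]

theorem ClosedComplemented.exists_continuous_rightInverse_mk [TopologicalSpace M]
    [IsTopologicalAddGroup M] {p : Submodule R M} (h : p.ClosedComplemented) :
    ∃ s : M ⧸ p →L[R] M, Function.RightInverse s Quotient.mk := by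
  obtain ⟨q, hq⟩ := h.exists_isTopCompl
  exact ⟨q.subtypeL ∘L (quotientEquivOfIsTopCompl p q hq : M ⧸ p →L[R] q),
    fun z => (quotientEquivOfIsTopCompl p q hq).symm_apply_apply z⟩

theorem image_mk_biUnion_eq_image {X : Type*} {p : Submodule R M} {T : X → Set M}
    {t : X → M ⧸ p} (hne : ∀ x, (T x).Nonempty) (ht : ∀ x, ∀ y ∈ T x, Quotient.mk y = t x)
    (B : Set X) : Quotient.mk '' (⋃ x ∈ B, T x) = t '' B := by
  ext z
  simp only [Set.mem_image, Set.mem_iUnion₂, exists_prop]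
  constructor
  · rintro ⟨y, ⟨x, hx, hy⟩, rfl⟩
    exact ⟨x, hx, (ht x y hy).symm⟩
  · rintro ⟨x, hx, rfl⟩
    obtain ⟨y, hy⟩ := hne x
    exact ⟨y, ⟨x, hx, hy⟩, ht x y hy⟩

end Submodule

theorem linearRelation_compact_iff_quotient_compact_general
    {X Y : Type*} [NormedAddCommGroup X] [NormedSpace ℂ X]
    [NormedAddCommGroup Y] [NormedSpace ℂ Y]
    (T : X → Set Y) (hne : ∀ x, (T x).Nonempty)
    (W : Submodule ℂ Y) (hWfin : FiniteDimensional ℂ W)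
    (t : X →ₗ[ℂ] Y ⧸ W)
    (ht : ∀ x, ∀ y ∈ T x, Submodule.Quotient.mk y = t x) :
    (∀ B : Set X, Bornology.IsBounded B →
        ∃ C : Set Y, IsCompact C ∧ (⋃ x ∈ B, T x) ⊆ C + (W : Set Y)) ↔
    (∀ B : Set X, Bornology.IsBounded B →
        ∃ C : Set (Y ⧸ W), IsCompact C ∧ t '' B ⊆ C) := by
  have hT : ∀ B, Submodule.Quotient.mk '' (⋃ x ∈ B, T x) = t '' B :=
    Submodule.image_mk_biUnion_eq_image hne ht
  constructor
  · intro h B hB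
    obtain ⟨C, hC, hsub⟩ := h B hB
    refine ⟨Submodule.Quotient.mk '' C, hC.image continuous_quot_mk, ?_⟩
    calc t '' B = Submodule.Quotient.mk '' (⋃ x ∈ B, T x) := (hT B).symm
      _ ⊆ Submodule.Quotient.mk '' (C + (W : Set Y)) := Set.image_mono hsub
      _ = Submodule.Quotient.mk '' C := W.image_mk_add_eq C
  · intro h B hB
    obtain ⟨C, hC, hsub⟩ := h B hB
    have := hWfin
    obtain ⟨s, hs⟩ :=
      (Submodule.ClosedComplemented.of_finiteDimensional W).exists_continuous_rightInverse_mk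
    refine ⟨s '' C, hC.image s.continuous, ?_⟩
    calc (⋃ x ∈ B, T x) ⊆ Submodule.Quotient.mk ⁻¹' (t '' B) := by
          rw [← hT]; exact Set.subset_preimage_image _ _
      _ ⊆ Submodule.Quotient.mk ⁻¹' C := Set.preimage_mono hsub
      _ = s '' C + (W : Set Y) := Submodule.preimage_mk_eq_image_add hs C

/-- A linear relation `T` with finite-dimensional `T 0` is compact (in the sense that
every bounded set is mapped into `C + T 0` with `C` compact) if and only if the induced
single-valued quotient operator `Q_T ∘ T : X → Y ⧸ T 0` is a compact operator. -/
theorem linearRelation_compact_iff_quotient_compact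
    {X Y : Type*} [NormedAddCommGroup X] [NormedSpace ℂ X]
    [NormedAddCommGroup Y] [NormedSpace ℂ Y]
    (T : X → Set Y) (hne : ∀ x, (T x).Nonempty)
    (hsmul : ∀ a : ℂ, a ≠ 0 → ∀ x, T (a • x) = a • T x)
    (hadd : ∀ x y, T (x + y) = T x + T y)
    (W : Submodule ℂ Y) (hW : (W : Set Y) = T 0) (hWfin : FiniteDimensional ℂ W)
    (t : X →ₗ[ℂ] Y ⧸ W)
    (ht : ∀ x, ∀ y ∈ T x, Submodule.Quotient.mk y = t x) :
    (∀ B : Set X, Bornology.IsBounded B →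
        ∃ C : Set Y, IsCompact C ∧ (⋃ x ∈ B, T x) ⊆ C + (W : Set Y)) ↔
    (∀ B : Set X, Bornology.IsBounded B →
        ∃ C : Set (Y ⧸ W), IsCompact C ∧ t '' B ⊆ C) :=
  linearRelation_compact_iff_quotient_compact_general T hne W hWfin t ht
end

section
/- Let R : Y → Set Y be a linear relation on a normed space with R(0) finite-dimensional, and suppose R is compact: for every bounded B there is a compact C with R(B) ⊆ C + R(0). If M = Fix(R) = {x : x ∈ R(x)} is a subspace contained in its own image under R pointwise (x ∈ R(x) for x ∈ M), then M is finite-dimensional. -/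
/-!
The fixed points of a linear relation `R` form a subspace `M`, and every `x` in the unit ball of
`M` satisfies `x ∈ R x ⊆ C + R 0` with `C` compact. A bounded subset of `C + R 0` lies in `C` plus
a ball of the finite-dimensional space `R 0`, which is compact; so the unit ball of `M` is totally
bounded and `M` is finite dimensional by Riesz's theorem.
-/

open Pointwise Metric Topology

section

variable {𝕜 E : Type*}

def fixSubmodule [DivisionRing 𝕜] [AddCommGroup E] [Module 𝕜 E]
    (R : E → Set E) (h0 : (0 : E) ∈ R 0)
    (hsmul : ∀ a : 𝕜, a ≠ 0 → ∀ x, R (a • x) = a • R x)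
    (hadd : ∀ x y, R (x + y) = R x + R y) : Submodule 𝕜 E where
  carrier := {x | x ∈ R x}
  zero_mem' := h0
  add_mem' {x y} hx hy := by
    show x + y ∈ R (x + y)
    rw [hadd]
    exact Set.add_mem_add hx hy
  smul_mem' a x hx := by
    rcases eq_or_ne a 0 with rfl | ha
    · simpa using h0
    · show a • x ∈ R (a • x)
      rw [hsmul a ha]
      exact Set.smul_mem_smul_set hx

theorem Submodule.finiteDimensional_of_totallyBounded_inter_nhds
    [NontriviallyNormedField 𝕜] [CompleteSpace 𝕜] [NormedAddCommGroup E] [NormedSpace 𝕜 E]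
    (M : Submodule 𝕜 E) {U : Set E} (hU : U ∈ 𝓝 0) (h : TotallyBounded ((M : Set E) ∩ U)) :
    FiniteDimensional 𝕜 M :=
  .of_totallyBounded_nhds_zero 𝕜 (U := ((↑) : M → E) ⁻¹' U)
    (continuous_subtype_val.continuousAt.preimage_mem_nhds hU)
    ((totallyBounded_image_iff isUniformEmbedding_subtype_val.isUniformInducing).1 <| by
      rwa [Set.image_preimage_eq_inter_range, Subtype.range_coe, Set.inter_comm])

theorem Bornology.IsBounded.totallyBounded_of_subset_add_finiteDimensional
    [NontriviallyNormedField 𝕜] [LocallyCompactSpace 𝕜] [NormedAddCommGroup E] [NormedSpace 𝕜 E]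
    {s C : Set E} {W : Submodule 𝕜 E} [FiniteDimensional 𝕜 W]
    (hs : Bornology.IsBounded s) (hC : IsCompact C) (h : s ⊆ C + W) : TotallyBounded s := by
  have : ProperSpace W := FiniteDimensional.proper 𝕜 W
  obtain ⟨a, ha⟩ := hs.subset_closedBall 0
  obtain ⟨b, hb⟩ := hC.isBounded.subset_closedBall 0
  have hK : IsCompact (C + (↑) '' closedBall (0 : W) (a + b)) :=
    hC.add ((isCompact_closedBall _ _).image continuous_subtype_val)
  refine hK.totallyBounded.subset fun x hx ↦ ?_
  obtain ⟨c, hc, w, hw, rfl⟩ := h hx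
  have hcb : ‖c‖ ≤ b := mem_closedBall_zero_iff.1 (hb hc)
  have hxa : ‖c + w‖ ≤ a := mem_closedBall_zero_iff.1 (ha hx)
  have hw_norm : ‖w‖ ≤ a + b := calc
    ‖w‖ = ‖(c + w) - c‖ := by rw [add_sub_cancel_left]
    _ ≤ ‖c + w‖ + ‖c‖ := norm_sub_le _ _
    _ ≤ a + b := add_le_add hxa hcb
  exact Set.add_mem_add hc ⟨⟨w, hw⟩, mem_closedBall_zero_iff.2 hw_norm, rfl⟩

end

theorem fix_of_compact_relation_finiteDimensional_general
    {Y : Type*} [NormedAddCommGroup Y] [NormedSpace ℂ Y]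
    (R : Y → Set Y)
    (hsmul : ∀ a : ℂ, a ≠ 0 → ∀ x, R (a • x) = a • R x)
    (hadd : ∀ x y, R (x + y) = R x + R y)
    (hR0 : ∃ W : Submodule ℂ Y, (W : Set Y) = R 0 ∧ FiniteDimensional ℂ W)
    (hcompact : ∀ B : Set Y, Bornology.IsBounded B →
      ∃ C : Set Y, IsCompact C ∧ (⋃ x ∈ B, R x) ⊆ C + R 0) :
    ∃ M : Submodule ℂ Y, (M : Set Y) = {x | x ∈ R x} ∧ FiniteDimensional ℂ M := by
  obtain ⟨W, hW, hWfd⟩ := hR0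
  obtain ⟨C, hC, hCR⟩ := hcompact (closedBall 0 1) isBounded_closedBall
  let M := fixSubmodule R (hW ▸ W.zero_mem) hsmul hadd
  have hball : (M : Set Y) ∩ closedBall 0 1 ⊆ C + W := fun x ⟨hx, hx1⟩ ↦
    hW ▸ hCR (Set.mem_biUnion hx1 hx)
  have hbounded : Bornology.IsBounded ((M : Set Y) ∩ closedBall 0 1) :=
    isBounded_closedBall.subset Set.inter_subset_right
  exact ⟨M, rfl, M.finiteDimensional_of_totallyBounded_inter_nhds (closedBall_mem_nhds 0 one_pos)
    (hbounded.totallyBounded_of_subset_add_finiteDimensional hC hball)⟩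

/-- If `R` is a compact linear relation on a normed space with `R 0` finite dimensional,
then the fixed-point subspace `Fix(R) = {x | x ∈ R x}` is finite dimensional. -/
theorem fix_of_compact_relation_finiteDimensional
    {Y : Type*} [NormedAddCommGroup Y] [NormedSpace ℂ Y]
    (R : Y → Set Y) (hne : ∀ x, (R x).Nonempty)
    (hsmul : ∀ a : ℂ, a ≠ 0 → ∀ x, R (a • x) = a • R x)
    (hadd : ∀ x y, R (x + y) = R x + R y)
    (hR0 : ∃ W : Submodule ℂ Y, (W : Set Y) = R 0 ∧ FiniteDimensional ℂ W)
    (hcompact : ∀ B : Set Y, Bornology.IsBounded B →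
      ∃ C : Set Y, IsCompact C ∧ (⋃ x ∈ B, R x) ⊆ C + R 0) :
    ∃ M : Submodule ℂ Y, (M : Set Y) = {x | x ∈ R x} ∧ FiniteDimensional ℂ M :=
  fix_of_compact_relation_finiteDimensional_general R hsmul hadd hR0 hcompact
end
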